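/- Second derivative relation (Corollary 1, single mode): if C(τ) = −α η² [(1/(2c)+1/γ)e^{cτ} + (1/(2d)+1/γ)e^{dτ}] is the angle autocorrelation of a stable mode, then d²C/dτ²(τ) = −(α/(2γ)) η (c e^{cτ} − d e^{dτ}), which equals −(α/(2γ)) times the frequency impulse response of that mode. -/

import Mathlib

/-!
Differentiating twice multiplies the coefficients of `e^{cτ}` and `e^{dτ}` by `c²` and `d²`, and
`(1/(2c) + 1/γ) c² = c (2c + γ) / (2γ)`. Since `c + d = -γ`, we have `2c + γ = c - d = 1/η` and
`2d + γ = -1/η`, so the coefficients collapse to `-α η c / (2γ)` and `α η d / (2γ)`.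
-/

open Complex

lemma hasDerivAt_cexp_const_mul_ofReal (c : ℂ) (t : ℝ) :
    HasDerivAt (fun s : ℝ => exp (c * s)) (c * exp (c * t)) t := by
  simpa [mul_comm] using (((hasDerivAt_id (t : ℂ)).const_mul c).cexp).comp_ofReal

lemma deriv_exp_combination (A B c d : ℂ) :
    deriv (fun t : ℝ => A * exp (c * t) + B * exp (d * t))
      = fun t : ℝ => (A * c) * exp (c * t) + (B * d) * exp (d * t) := by
  funext t
  exact ((((hasDerivAt_cexp_const_mul_ofReal c t).const_mul A).add
    ((hasDerivAt_cexp_const_mul_ofReal d t).const_mul B)).congr_deriv (by ring)).deriv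

lemma deriv_deriv_exp_combination (A B c d : ℂ) :
    deriv (deriv fun t : ℝ => A * exp (c * t) + B * exp (d * t))
      = fun t : ℝ => (A * c ^ 2) * exp (c * t) + (B * d ^ 2) * exp (d * t) := by
  rw [deriv_exp_combination, deriv_exp_combination]
  funext t
  ring

-- Holds also at `c = 0`, where `1 / (2 * c) = 0`.
lemma one_div_two_mul_add_one_div_mul_sq {γ : ℂ} (hγ : γ ≠ 0) (c : ℂ) :
    (1 / (2 * c) + 1 / γ) * c ^ 2 = c * (2 * c + γ) / (2 * γ) := by
  rcases eq_or_ne c 0 with rfl | hc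
  · simp
  · field_simp
    ring

theorem stmt13_general (γ α : ℝ) (hγ : 0 < γ)
    (c d η : ℂ)
    (hsum : c + d = -(γ : ℂ)) (hdiff : c - d = 1 / η)
    (C : ℝ → ℂ)
    (hC : ∀ τ : ℝ, C τ = -(α : ℂ) * η ^ 2 *
      ((1 / (2 * c) + 1 / (γ : ℂ)) * Complex.exp (c * τ)
        + (1 / (2 * d) + 1 / (γ : ℂ)) * Complex.exp (d * τ))) :
    ∀ τ : ℝ, deriv (deriv C) τ
      = -((α : ℂ) / (2 * γ)) * (η * (c * Complex.exp (c * τ) - d * Complex.exp (d * τ))) := by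
  intro τ
  have hγ0 : (γ : ℂ) ≠ 0 := by exact_mod_cast hγ.ne'
  set A := -(α : ℂ) * η ^ 2 * (1 / (2 * c) + 1 / (γ : ℂ))
  set B := -(α : ℂ) * η ^ 2 * (1 / (2 * d) + 1 / (γ : ℂ))
  have hCAB : C = fun t : ℝ => A * exp (c * t) + B * exp (d * t) := by
    funext t
    rw [hC t]
    ring
  -- valid also at `η = 0`, where `1 / η = 0`
  have hη : η ^ 2 * (c - d) = η := by rw [hdiff, one_div, sq, mul_self_mul_inv]
  have hAc : A * c ^ 2 = -(α : ℂ) * η ^ 2 * (c * (2 * c + γ) / (2 * γ)) := by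
    rw [mul_assoc, one_div_two_mul_add_one_div_mul_sq hγ0]
  have hBd : B * d ^ 2 = -(α : ℂ) * η ^ 2 * (d * (2 * d + γ) / (2 * γ)) := by
    rw [mul_assoc, one_div_two_mul_add_one_div_mul_sq hγ0]
  rw [hCAB, deriv_deriv_exp_combination, hAc, hBd]
  linear_combination (-(α : ℂ) / (2 * γ)) * ((c * exp (c * τ) - d * exp (d * τ)) * hη
    + η ^ 2 * (c * exp (c * τ) + d * exp (d * τ)) * hsum)

/-- Corollary 1 (single mode): the second derivative of the angle autocorrelation
C(τ) = -αη²[(1/(2c)+1/γ)e^{cτ} + (1/(2d)+1/γ)e^{dτ}] satisfies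
C''(τ) = -(α/(2γ)) η (c e^{cτ} - d e^{dτ}), i.e., -(α/(2γ)) times the mode's frequency
impulse response. -/
theorem stmt13 (γ α : ℝ) (hγ : 0 < γ) (hα : 0 < α)
    (c d η : ℂ) (hcre : c.re < 0) (hdre : d.re < 0)
    (hsum : c + d = -(γ : ℂ)) (hdiff : c - d = 1 / η) (hη : η ≠ 0)
    (C : ℝ → ℂ)
    (hC : ∀ τ : ℝ, C τ = -(α : ℂ) * η ^ 2 *
      ((1 / (2 * c) + 1 / (γ : ℂ)) * Complex.exp (c * τ)
        + (1 / (2 * d) + 1 / (γ : ℂ)) * Complex.exp (d * τ))) :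
    ∀ τ : ℝ, deriv (deriv C) τ
      = -((α : ℂ) / (2 * γ)) * (η * (c * Complex.exp (c * τ) - d * Complex.exp (d * τ))) :=
  stmt13_general γ α hγ c d η hsum hdiff C hC
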